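/- Let β, γ, μ, ε > 0 and α ∈ (0,1) satisfy βγ²/4 < ε < βγ²/2, ε > βγ²/2 - (αγμ/2 - (1-α)μ²/(2β)), and γ > (1-α)μ/(αβ). Then the matrix A⁻ = [[-γβ, -(1/2)γαμ - ε, -(1/2)γαμ], [β, (1/2)αμ, (1/2)αμ], [β, (1/2)(α-2)μ, (1/2)(α-2)μ]] is Hurwitz. -/

import Mathlib

/-! Routh–Hurwitz for cubics. The characteristic polynomial of `A⁻` is
`z ^ 3 + (γβ + (1 - α)μ) z ^ 2 + β(γμ + ε) z + εβμ`; its coefficients are positive, and the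
Hurwitz condition `c < a b` reduces to `αμε < βγ²μ`, which follows from `ε < βγ²/2` and `α < 1`. -/

theorem Complex.re_neg_of_cubic_eq_zero {a b c : ℝ} (ha : 0 < a) (hb : 0 < b) (hc : 0 < c)
    (habc : c < a * b) {z : ℂ} (hz : z ^ 3 + a * z ^ 2 + b * z + c = 0) : z.re < 0 := by
  by_contra! hx
  obtain ⟨hre, him⟩ := Complex.ext_iff.mp hz
  simp only [Complex.add_re, Complex.add_im, Complex.mul_re, Complex.mul_im, Complex.ofReal_re,
    Complex.ofReal_im, Complex.zero_re, Complex.zero_im, pow_succ, pow_zero, Complex.one_re,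
    Complex.one_im] at hre him
  set x := z.re
  set y := z.im
  rcases eq_or_ne y 0 with hy | hy
  · rw [hy] at hre
    nlinarith [pow_nonneg hx 3, mul_nonneg ha.le (sq_nonneg x), mul_nonneg hb.le hx]
  · have hy2 : y ^ 2 = 3 * x ^ 2 + 2 * a * x + b := by
      have : y * (3 * x ^ 2 - y ^ 2 + 2 * a * x + b) = 0 := by linear_combination him
      linarith [(mul_eq_zero.mp this).resolve_left hy]
    have hc' : c = 8 * x ^ 3 + 8 * a * x ^ 2 + 2 * (b + a ^ 2) * x + a * b := by
      linear_combination hre + (3 * x + a) * hy2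
    nlinarith [pow_nonneg hx 3, mul_nonneg ha.le (sq_nonneg x),
      mul_nonneg (add_nonneg hb.le (sq_nonneg a)) hx]

namespace Matrix

variable {R : Type*} [CommRing R]

def principalMinorSum (A : Matrix (Fin 3) (Fin 3) R) : R :=
  A 0 0 * A 1 1 - A 0 1 * A 1 0 + A 0 0 * A 2 2 - A 0 2 * A 2 0 + A 1 1 * A 2 2 - A 1 2 * A 2 1

theorem eval_charpoly_fin_three (A : Matrix (Fin 3) (Fin 3) R) (r : R) :
    A.charpoly.eval r = r ^ 3 - A.trace * r ^ 2 + A.principalMinorSum * r - A.det := by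
  simp only [eval_charpoly, scalar_apply, det_fin_three, trace_fin_three, principalMinorSum,
    sub_apply, diagonal_apply_eq, diagonal_apply_ne, ne_eq, Fin.reduceEq, not_false_eq_true]
  ring

theorem re_neg_of_mem_spectrum_fin_three {A : Matrix (Fin 3) (Fin 3) ℝ} {a b c : ℝ}
    (htr : -A.trace = a) (hminor : A.principalMinorSum = b) (hdet : -A.det = c)
    (ha : 0 < a) (hb : 0 < b) (hc : 0 < c) (habc : c < a * b) {z : ℂ}
    (hz : z ∈ spectrum ℂ (A.map Complex.ofReal)) : z.re < 0 := by
  rw [mem_spectrum_iff_isRoot_charpoly, Polynomial.IsRoot.def, eval_charpoly_fin_three] at hz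
  refine Complex.re_neg_of_cubic_eq_zero ha hb hc habc ?_
  subst htr hminor hdet
  rw [← hz]
  simp only [principalMinorSum, det_fin_three, trace_fin_three, map_apply, Complex.ofReal_add,
    Complex.ofReal_sub, Complex.ofReal_mul, Complex.ofReal_neg]
  ring

end Matrix

theorem Aminus_hurwitz_cond1_general (α β γ μ ε : ℝ) (hβ : 0 < β) (hγ : 0 < γ) (hμ : 0 < μ)
    (hε : 0 < ε) (hα : α ∈ Set.Ioo (0:ℝ) 1)
    (h2 : ε < β*γ^2/2) :
    ∀ z ∈ spectrum ℂ
      ((!![-γ*β, -(1/2)*γ*α*μ - ε, -(1/2)*γ*α*μ;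
           β, (1/2)*α*μ, (1/2)*α*μ;
           β, (1/2)*(α-2)*μ, (1/2)*(α-2)*μ] : Matrix (Fin 3) (Fin 3) ℝ).map
        (Complex.ofReal)),
      z.re < 0 := by
  obtain ⟨-, hα1⟩ := hα
  intro z hz
  refine Matrix.re_neg_of_mem_spectrum_fin_three (a := γ * β + (1 - α) * μ) (b := β * (γ * μ + ε))
    (c := ε * β * μ) ?_ ?_ ?_ (add_pos (mul_pos hγ hβ) (mul_pos (sub_pos.2 hα1) hμ))
    (by positivity) (by positivity) ?habc hz
  case habc =>
    have hαε : α * μ * ε < β * γ ^ 2 * μ := by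
      calc α * μ * ε < μ * ε := by nlinarith [mul_pos hμ hε]
        _ < μ * (β * γ ^ 2 / 2) := mul_lt_mul_of_pos_left h2 hμ
        _ ≤ β * γ ^ 2 * μ := by nlinarith [mul_pos (mul_pos hβ (pow_pos hγ 2)) hμ]
    nlinarith [mul_pos (mul_pos hγ hβ) hε, mul_pos (mul_pos (sub_pos.2 hα1) hγ) (pow_pos hμ 2)]
  all_goals
    simp only [Matrix.trace_fin_three, Matrix.principalMinorSum, Matrix.det_fin_three,
      Matrix.of_apply, Matrix.cons_val', Matrix.cons_val_zero, Matrix.cons_val_one,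
      Matrix.cons_val, Matrix.cons_val_fin_one]
    ring

theorem Aminus_hurwitz_cond1 (α β γ μ ε : ℝ) (hβ : 0 < β) (hγ : 0 < γ) (hμ : 0 < μ)
    (hε : 0 < ε) (hα : α ∈ Set.Ioo (0:ℝ) 1)
    (h1 : β*γ^2/4 < ε) (h2 : ε < β*γ^2/2)
    (h3 : ε > β*γ^2/2 - (α*γ*μ/2 - (1-α)*μ^2/(2*β)))
    (h4 : γ > (1-α)*μ/(α*β)) :
    ∀ z ∈ spectrum ℂ
      ((!![-γ*β, -(1/2)*γ*α*μ - ε, -(1/2)*γ*α*μ;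
           β, (1/2)*α*μ, (1/2)*α*μ;
           β, (1/2)*(α-2)*μ, (1/2)*(α-2)*μ] : Matrix (Fin 3) (Fin 3) ℝ).map
        (Complex.ofReal)),
      z.re < 0 :=
  Aminus_hurwitz_cond1_general α β γ μ ε hβ hγ hμ hε hα h2
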